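/- arXiv:2604.03659 — 3 statements merged into one kernel-verified Lean document; each statement's English description precedes it below -/
import Mathlib

section
/- Let σ > 0 and let x, y ∈ ℝ with x ≠ y. Then K_σ(x,y) ≥ 2^{σ+1/2} Γ((σ+1)/2) / |x−y|^{1+σ}. -/
open MeasureTheory Real ENNReal

/-- The Mehler kernel `M_t(x,y)`. -/
noncomputable def mehler (t x y : ℝ) : ℝ :=
  (1 - Real.exp (-2 * t)) ^ (-(1 : ℝ) / 2) *
    Real.exp (-(Real.exp (-2 * t) * x ^ 2 - 2 * Real.exp (-t) * x * y +
      Real.exp (-2 * t) * y ^ 2) / (2 * (1 - Real.exp (-2 * t))))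

/-- The kernel `K_σ(x,y) = ∫₀^∞ M_t(x,y) t^{-σ/2-1} dt`, a value in `[0,∞]`. -/
noncomputable def Kkernel (σ x y : ℝ) : ℝ≥0∞ :=
  ∫⁻ t in Set.Ioi (0 : ℝ), ENNReal.ofReal (mehler t x y * t ^ (-σ / 2 - 1))

lemma mehler_lower (x y t : ℝ) (ht : 0 < t) :
    (2 * t) ^ (-(1 : ℝ) / 2) * Real.exp (-(x - y) ^ 2 / (4 * t)) ≤ mehler t x y := by
  have ha2 : Real.exp (-2 * t) = Real.exp (-t) ^ 2 := by
    rw [← Real.exp_nat_mul]; ring_nf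
  set a := Real.exp (-t) with ha
  have ha0 : 0 < a := Real.exp_pos _
  have ha1 : a < 1 := Real.exp_lt_one_iff.mpr (by linarith)
  have hD : 0 < 1 - a ^ 2 := by nlinarith
  have hle : 1 - a ^ 2 ≤ 2 * t := by
    have := Real.add_one_le_exp (-2 * t)
    rw [ha2] at this; linarith
  have h2ta : 2 * t * a ≤ 1 - a ^ 2 := by
    have hs : t ≤ Real.sinh t := Real.self_le_sinh_iff.mpr ht.le
    rw [Real.sinh_eq] at hs
    have hexp : Real.exp t * a = 1 := by
      rw [ha, ← Real.exp_add]; simp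
    nlinarith [Real.exp_pos t]
  unfold mehler
  rw [ha2]
  gcongr ?_ * ?_
  · exact Real.rpow_le_rpow_of_nonpos (by linarith) hle (by norm_num)
  · rw [Real.exp_le_exp]
    rw [div_le_div_iff₀ (by linarith) (by linarith)]
    have hN : a ^ 2 * x ^ 2 - 2 * a * x * y + a ^ 2 * y ^ 2 ≤ a * (x - y) ^ 2 := by
      nlinarith [mul_nonneg (mul_nonneg ha0.le (by linarith : (0:ℝ) ≤ 1 - a))
        (add_nonneg (sq_nonneg x) (sq_nonneg y))]
    nlinarith [sq_nonneg (x - y), mul_nonneg (mul_nonneg ht.le ha0.le) (sq_nonneg (x - y))]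

lemma image_inv_Ioi : (fun y : ℝ => y⁻¹) '' Set.Ioi 0 = Set.Ioi 0 := by
  ext u
  constructor
  · rintro ⟨t, ht, rfl⟩; exact inv_pos.mpr (Set.mem_Ioi.mp ht)
  · intro hu; exact ⟨u⁻¹, Set.mem_Ioi.mpr (inv_pos.mpr (Set.mem_Ioi.mp hu)), inv_inv u⟩

lemma deriv_integrand_eq (σ r : ℝ) {t : ℝ} (ht : t ∈ Set.Ioi (0:ℝ)) :
    |(-(t ^ 2)⁻¹)| • ((t⁻¹) ^ ((σ + 1) / 2 - 1) * Real.exp (-(r * t⁻¹))) =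
      t ^ (-σ / 2 - 3 / 2) * Real.exp (-(r * t⁻¹)) := by
  have ht0 : (0:ℝ) < t := ht
  rw [abs_neg, abs_inv, abs_of_pos (by positivity : (0:ℝ) < t ^ 2), smul_eq_mul,
    Real.inv_rpow ht0.le, ← Real.rpow_neg ht0.le, ← mul_assoc]
  congr 1
  rw [show ((t:ℝ) ^ 2)⁻¹ = t ^ (-2 : ℝ) by
    rw [← Real.rpow_natCast t 2, ← Real.rpow_neg ht0.le]; norm_num,
    ← Real.rpow_add ht0]
  congr 1; ring

lemma key_integral (σ : ℝ) (hσ : 0 < σ) (r : ℝ) (hr : 0 < r) :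
    IntegrableOn (fun t : ℝ => t ^ (-σ / 2 - 3 / 2) * Real.exp (-(r * t⁻¹))) (Set.Ioi 0) ∧
      ∫ t in Set.Ioi (0:ℝ), t ^ (-σ / 2 - 3 / 2) * Real.exp (-(r * t⁻¹)) =
        (1 / r) ^ ((σ + 1) / 2) * Real.Gamma ((σ + 1) / 2) := by
  set g : ℝ → ℝ := fun u => u ^ ((σ + 1) / 2 - 1) * Real.exp (-(r * u)) with hg
  have hderiv : ∀ t ∈ Set.Ioi (0:ℝ),
      HasDerivWithinAt (fun y : ℝ => y⁻¹) (-(t ^ 2)⁻¹) (Set.Ioi 0) t :=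
    fun t ht => (hasDerivAt_inv (ne_of_gt ht)).hasDerivWithinAt
  have hinj : Set.InjOn (fun y : ℝ => y⁻¹) (Set.Ioi 0) := fun a _ b _ h => inv_injective h
  have hgint : IntegrableOn g (Set.Ioi 0) := by
    have := integrableOn_rpow_mul_exp_neg_mul_rpow
      (show (-1:ℝ) < (σ + 1) / 2 - 1 by linarith) (p := 1) one_pos hr
    refine this.congr_fun (fun u hu => ?_) measurableSet_Ioi
    simp [hg, Real.rpow_one, neg_mul]
  constructor
  · have := (integrableOn_image_iff_integrableOn_abs_deriv_smul measurableSet_Ioi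
      hderiv hinj g).mp (by rwa [image_inv_Ioi])
    refine this.congr_fun (fun t ht => ?_) measurableSet_Ioi
    exact deriv_integrand_eq σ r ht
  · have h1 := integral_image_eq_integral_abs_deriv_smul measurableSet_Ioi hderiv hinj g
    rw [image_inv_Ioi] at h1
    have h2 : ∫ t in Set.Ioi (0:ℝ), t ^ (-σ / 2 - 3 / 2) * Real.exp (-(r * t⁻¹)) =
        ∫ u in Set.Ioi (0:ℝ), g u := by
      rw [h1]
      refine setIntegral_congr_fun measurableSet_Ioi (fun t ht => ?_)
      exact (deriv_integrand_eq σ r ht).symm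
    rw [h2, hg]
    exact Real.integral_rpow_mul_exp_neg_mul_Ioi (by linarith) hr

/-- Lower bound for the kernel `K_σ`:
`K_σ(x,y) ≥ 2^{σ+1/2} Γ((σ+1)/2) / |x−y|^{1+σ}` for `x ≠ y`. -/
theorem kernel_lower_bound (σ x y : ℝ) (hσ : 0 < σ) (hxy : x ≠ y) :
    ENNReal.ofReal ((2 : ℝ) ^ (σ + 1 / 2) * Real.Gamma ((σ + 1) / 2) / |x - y| ^ (1 + σ)) ≤
      Kkernel σ x y := by
  set d : ℝ := |x - y| with hdxy
  have hd : 0 < d := abs_pos.mpr (sub_ne_zero.mpr hxy)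
  set r : ℝ := (x - y) ^ 2 / 4 with hrdef
  have hxy0 : x - y ≠ 0 := sub_ne_zero.mpr hxy
  have hr : 0 < r := by positivity
  set h : ℝ → ℝ := fun t =>
    (2 * t) ^ (-(1 : ℝ) / 2) * Real.exp (-(x - y) ^ 2 / (4 * t)) * t ^ (-σ / 2 - 1) with hh
  set F : ℝ → ℝ := fun t => t ^ (-σ / 2 - 3 / 2) * Real.exp (-(r * t⁻¹)) with hF
  obtain ⟨hFint, hFval⟩ := key_integral σ hσ r hr
  -- pointwise rewriting of h
  have hhF : ∀ t ∈ Set.Ioi (0:ℝ), h t = (2:ℝ) ^ (-(1:ℝ) / 2) * F t := by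
    intro t ht
    have ht0 : (0:ℝ) < t := ht
    show (2 * t) ^ (-(1 : ℝ) / 2) * Real.exp (-(x - y) ^ 2 / (4 * t)) * t ^ (-σ / 2 - 1) =
      (2:ℝ) ^ (-(1:ℝ) / 2) * (t ^ (-σ / 2 - 3 / 2) * Real.exp (-(r * t⁻¹)))
    rw [Real.mul_rpow (by norm_num) ht0.le]
    have e1 : -(x - y) ^ 2 / (4 * t) = -(r * t⁻¹) := by
      rw [hrdef]; field_simp
    rw [e1, mul_assoc, mul_assoc]
    congr 1
    rw [show t ^ (-(1:ℝ)/2) * (Real.exp (-(r * t⁻¹)) * t ^ (-σ / 2 - 1)) =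
      t ^ (-(1:ℝ)/2) * t ^ (-σ / 2 - 1) * Real.exp (-(r * t⁻¹)) by ring,
      ← Real.rpow_add ht0]
    congr 2
    ring
  -- integrability and nonnegativity of h on Ioi 0
  have hhint : IntegrableOn h (Set.Ioi 0) := by
    have h1 : IntegrableOn (fun t => (2:ℝ) ^ (-(1:ℝ) / 2) * F t) (Set.Ioi 0) :=
      hFint.const_mul _
    exact h1.congr_fun (fun t ht => (hhF t ht).symm) measurableSet_Ioi
  have hhnn : 0 ≤ᵐ[volume.restrict (Set.Ioi (0:ℝ))] h := by
    refine (ae_restrict_iff' measurableSet_Ioi).mpr (ae_of_all _ (fun t ht => ?_))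
    have ht0 : (0:ℝ) < t := ht
    rw [hh]
    positivity
  -- value of the integral of h
  have hhval : ∫ t in Set.Ioi (0:ℝ), h t =
      (2:ℝ) ^ (-(1:ℝ) / 2) * ((1 / r) ^ ((σ + 1) / 2) * Real.Gamma ((σ + 1) / 2)) := by
    rw [setIntegral_congr_fun measurableSet_Ioi hhF, integral_const_mul, hFval]
  -- constant computation
  have hconst : (2:ℝ) ^ (-(1:ℝ) / 2) * ((1 / r) ^ ((σ + 1) / 2) * Real.Gamma ((σ + 1) / 2)) =
      (2 : ℝ) ^ (σ + 1 / 2) * Real.Gamma ((σ + 1) / 2) / d ^ (1 + σ) := by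
    have e1 : (1:ℝ) / r = 4 / d ^ 2 := by
      rw [hrdef, one_div_div, hdxy, sq_abs]
    have e2 : ((4:ℝ) / d ^ 2) ^ ((σ + 1) / 2) = 2 ^ (σ + 1) / d ^ (1 + σ) := by
      rw [Real.div_rpow (by norm_num) (by positivity)]
      congr 1
      · rw [show (4:ℝ) = (2:ℝ) ^ (2:ℕ) by norm_num, ← Real.rpow_natCast (2:ℝ) 2,
          ← Real.rpow_mul (by norm_num : (0:ℝ) ≤ 2)]
        congr 1; push_cast; ring
      · rw [← Real.rpow_natCast d 2, ← Real.rpow_mul hd.le]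
        congr 1; push_cast; ring
    rw [e1, e2, div_mul_eq_mul_div, ← mul_div_assoc, ← mul_assoc,
      show (2:ℝ) ^ (-(1:ℝ)/2) * 2 ^ (σ + 1) = 2 ^ (σ + 1/2) by
        rw [← Real.rpow_add (by norm_num : (0:ℝ) < 2)]; congr 1; ring]
  calc ENNReal.ofReal ((2 : ℝ) ^ (σ + 1 / 2) * Real.Gamma ((σ + 1) / 2) / d ^ (1 + σ))
      = ∫⁻ t in Set.Ioi (0:ℝ), ENNReal.ofReal (h t) := by
        rw [← ofReal_integral_eq_lintegral_ofReal hhint hhnn, hhval, hconst]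
    _ ≤ Kkernel σ x y := by
        refine setLIntegral_mono' measurableSet_Ioi (fun t ht => ?_)
        refine ENNReal.ofReal_le_ofReal ?_
        exact mul_le_mul_of_nonneg_right (mehler_lower x y t ht)
          (Real.rpow_nonneg (le_of_lt ht) _)
end

section
/- Let σ > 0 and ℓ > 0. Then there exists a constant C_ℓ > 0 such that for all x, y ∈ [−ℓ, ℓ] with x ≠ y one has K_σ(x,y) ≤ C_ℓ / |x−y|^{1+σ}. -/
open MeasureTheory Real ENNReal

/-- `u^p e^{-u} ≤ p^p e^{-p}` for `u, p > 0`, rearranged. -/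
lemma exp_neg_le_rpow {u p : ℝ} (hu : 0 < u) (hp : 0 < p) :
    Real.exp (-u) ≤ p ^ p * Real.exp (-p) * u ^ (-p) := by
  have h1 : Real.log (u / p) ≤ u / p - 1 := Real.log_le_sub_one_of_pos (by positivity)
  have h2 : p * Real.log u - u ≤ p * Real.log p - p := by
    rw [Real.log_div hu.ne' hp.ne'] at h1
    have := mul_le_mul_of_nonneg_left h1 hp.le
    rw [mul_sub] at this
    have hup : p * (u / p) = u := by field_simp
    nlinarith
  have e1 : Real.exp (-u) = Real.exp (p * Real.log u - u) * u ^ (-p) := by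
    rw [Real.rpow_def_of_pos hu, ← Real.exp_add]
    congr 1; ring
  have e2 : p ^ p * Real.exp (-p) = Real.exp (p * Real.log p - p) * 1 := by
    rw [Real.rpow_def_of_pos hp, ← Real.exp_add, mul_one]
    congr 1; ring
  rw [e1, e2, mul_one]
  exact mul_le_mul_of_nonneg_right (Real.exp_le_exp.mpr h2) (Real.rpow_nonneg hu.le _)

lemma one_sub_exp_pos' {t : ℝ} (ht : 0 < t) : 0 < 1 - Real.exp (-2 * t) := by
  have : Real.exp (-2 * t) < 1 := Real.exp_lt_one_iff.mpr (by linarith)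
  linarith

lemma one_sub_exp_ge {t : ℝ} (ht0 : 0 ≤ t) (ht1 : t ≤ 1) :
    (1 - Real.exp (-2)) * t ≤ 1 - Real.exp (-2 * t) := by
  have h := convexOn_exp.2 (Set.mem_univ (0:ℝ)) (Set.mem_univ (-2:ℝ))
    (by linarith : (0:ℝ) ≤ 1 - t) ht0 (by ring)
  simp only [smul_eq_mul, mul_zero, zero_add, Real.exp_zero, mul_one] at h
  rw [show (-2:ℝ) * t = t * -2 by ring]
  linarith

lemma one_sub_exp_le {t : ℝ} : 1 - Real.exp (-2 * t) ≤ 2 * t := by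
  have := Real.add_one_le_exp (-2 * t)
  linarith

lemma hexp2 : (0:ℝ) < 1 - Real.exp (-2) := by
  have : Real.exp (-2:ℝ) < 1 := Real.exp_lt_one_iff.mpr (by norm_num)
  linarith

/-- The main pointwise bound on the Mehler kernel on the square `[-ℓ,ℓ]²`. -/
lemma mehler_le {ℓ x y t : ℝ} (hℓ : 0 < ℓ) (hx : |x| ≤ ℓ) (hy : |y| ≤ ℓ) (ht : 0 < t) :
    mehler t x y ≤ Real.exp (ℓ ^ 2) * ((1 - Real.exp (-2 * t)) ^ (-(1:ℝ)/2) *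
      Real.exp (-(Real.exp (-2 * t) * (x - y) ^ 2) / (2 * (1 - Real.exp (-2 * t))))) := by
  set q := Real.exp (-t) with hqdef
  have hq0 : 0 < q := Real.exp_pos _
  have hq1 : q < 1 := Real.exp_lt_one_iff.mpr (by linarith)
  have hq2 : Real.exp (-2 * t) = q ^ 2 := by
    rw [show (-2:ℝ) * t = (-t) + (-t) by ring, Real.exp_add, sq]
  have hD : 0 < 1 - q ^ 2 := by nlinarith
  have hxy : x * y ≤ ℓ ^ 2 := by
    have h1 : x * y ≤ |x| * |y| := by rw [← abs_mul]; exact le_abs_self _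
    nlinarith [abs_nonneg x, abs_nonneg y]
  have key : -(q ^ 2 * x ^ 2 - 2 * q * x * y + q ^ 2 * y ^ 2) / (2 * (1 - q ^ 2)) ≤
      ℓ ^ 2 + -(q ^ 2 * (x - y) ^ 2) / (2 * (1 - q ^ 2)) := by
    rw [← sub_nonneg]
    have heq : ℓ ^ 2 + -(q ^ 2 * (x - y) ^ 2) / (2 * (1 - q ^ 2)) -
        -(q ^ 2 * x ^ 2 - 2 * q * x * y + q ^ 2 * y ^ 2) / (2 * (1 - q ^ 2)) =
        (2 * (1 - q ^ 2) * ℓ ^ 2 - 2 * q * (1 - q) * (x * y)) / (2 * (1 - q ^ 2)) := by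
      field_simp
      ring
    rw [heq]
    apply div_nonneg _ (by positivity)
    nlinarith [mul_le_mul_of_nonneg_left hxy (by nlinarith : (0:ℝ) ≤ 2 * q * (1 - q))]
  have key2 : Real.exp (-(q ^ 2 * x ^ 2 - 2 * q * x * y + q ^ 2 * y ^ 2) / (2 * (1 - q ^ 2))) ≤
      Real.exp (ℓ ^ 2) * Real.exp (-(q ^ 2 * (x - y) ^ 2) / (2 * (1 - q ^ 2))) := by
    rw [← Real.exp_add]
    exact Real.exp_le_exp.mpr (by linarith)
  unfold mehler
  rw [hq2, ← hqdef, mul_left_comm]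
  exact mul_le_mul_of_nonneg_left key2 (Real.rpow_nonneg hD.le _)

/-- Bound for `t ∈ (0,1]` keeping the Gaussian factor. -/
lemma region1_bound {σ ℓ x y t : ℝ} (hσ : 0 < σ) (hℓ : 0 < ℓ) (hx : |x| ≤ ℓ) (hy : |y| ≤ ℓ)
    (hxy : x ≠ y) (ht0 : 0 < t) (ht1 : t ≤ 1) :
    mehler t x y * t ^ (-σ / 2 - 1) ≤
      Real.exp (ℓ ^ 2) * (1 - Real.exp (-2)) ^ (-(1:ℝ)/2) *
        ((σ/2 + 3/2) ^ (σ/2 + 3/2) * Real.exp (-(σ/2 + 3/2)) *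
          (Real.exp (-2) / 4) ^ (-(σ/2 + 3/2))) *
        |x - y| ^ (-(2 * (σ/2 + 3/2))) := by
  set p : ℝ := σ/2 + 3/2 with hpdef
  set a : ℝ := Real.exp (-2) / 4 with hadef
  set r : ℝ := |x - y| with hrdef
  have hp : 0 < p := by rw [hpdef]; linarith
  have ha : 0 < a := by rw [hadef]; positivity
  have hr0 : 0 < r := abs_pos.mpr (sub_ne_zero.mpr hxy)
  have hm := mehler_le hℓ hx hy ht0
  have hA : (1 - Real.exp (-2 * t)) ^ (-(1:ℝ)/2) ≤
      (1 - Real.exp (-2)) ^ (-(1:ℝ)/2) * t ^ (-(1:ℝ)/2) := by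
    calc (1 - Real.exp (-2 * t)) ^ (-(1:ℝ)/2)
        ≤ ((1 - Real.exp (-2)) * t) ^ (-(1:ℝ)/2) :=
          Real.rpow_le_rpow_of_nonpos (mul_pos hexp2 ht0) (one_sub_exp_ge ht0.le ht1)
            (by norm_num)
      _ = (1 - Real.exp (-2)) ^ (-(1:ℝ)/2) * t ^ (-(1:ℝ)/2) :=
          Real.mul_rpow hexp2.le ht0.le
  have hG : Real.exp (-(Real.exp (-2 * t) * (x - y) ^ 2) / (2 * (1 - Real.exp (-2 * t)))) ≤
      p ^ p * Real.exp (-p) * (a * r ^ 2 / t) ^ (-p) := by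
    have hq2 : Real.exp (-2:ℝ) ≤ Real.exp (-2 * t) := Real.exp_le_exp.mpr (by linarith)
    have hden : 2 * (1 - Real.exp (-2 * t)) ≤ 4 * t := by
      have := one_sub_exp_le (t := t); linarith
    have hfrac : a * r ^ 2 / t ≤
        Real.exp (-2 * t) * (x - y) ^ 2 / (2 * (1 - Real.exp (-2 * t))) := by
      have hr2 : r ^ 2 = (x - y) ^ 2 := sq_abs _
      rw [hadef, hr2, div_mul_eq_mul_div, div_div]
      exact div_le_div₀ (by positivity) (mul_le_mul_of_nonneg_right hq2 (sq_nonneg _))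
        (by have := one_sub_exp_pos' ht0; linarith) hden
    calc Real.exp (-(Real.exp (-2 * t) * (x - y) ^ 2) / (2 * (1 - Real.exp (-2 * t))))
        = Real.exp (-(Real.exp (-2 * t) * (x - y) ^ 2 / (2 * (1 - Real.exp (-2 * t))))) := by
          rw [neg_div]
      _ ≤ Real.exp (-(a * r ^ 2 / t)) := Real.exp_le_exp.mpr (neg_le_neg hfrac)
      _ ≤ p ^ p * Real.exp (-p) * (a * r ^ 2 / t) ^ (-p) :=
          exp_neg_le_rpow (by positivity) hp
  have hsplit : (a * r ^ 2 / t) ^ (-p) = a ^ (-p) * r ^ (-(2 * p)) * t ^ p := by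
    rw [Real.div_rpow (by positivity) ht0.le, div_eq_mul_inv,
      Real.mul_rpow ha.le (sq_nonneg r), ← Real.rpow_natCast r 2, ← Real.rpow_mul hr0.le,
      show ((2:ℕ):ℝ) * (-p) = -(2 * p) by push_cast; ring,
      ← Real.rpow_neg ht0.le, neg_neg]
  have hT : t ^ (-(1:ℝ)/2) * t ^ p * t ^ (-σ / 2 - 1) = 1 := by
    rw [← Real.rpow_add ht0, ← Real.rpow_add ht0,
      show -(1:ℝ)/2 + p + (-σ / 2 - 1) = 0 by rw [hpdef]; ring, Real.rpow_zero]
  calc mehler t x y * t ^ (-σ / 2 - 1)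
      ≤ Real.exp (ℓ ^ 2) * ((1 - Real.exp (-2 * t)) ^ (-(1:ℝ)/2) *
          Real.exp (-(Real.exp (-2 * t) * (x - y) ^ 2) / (2 * (1 - Real.exp (-2 * t))))) *
          t ^ (-σ / 2 - 1) :=
        mul_le_mul_of_nonneg_right hm (Real.rpow_nonneg ht0.le _)
    _ ≤ Real.exp (ℓ ^ 2) * (((1 - Real.exp (-2)) ^ (-(1:ℝ)/2) * t ^ (-(1:ℝ)/2)) *
          (p ^ p * Real.exp (-p) * (a * r ^ 2 / t) ^ (-p))) * t ^ (-σ / 2 - 1) := by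
        apply mul_le_mul_of_nonneg_right _ (Real.rpow_nonneg ht0.le _)
        apply mul_le_mul_of_nonneg_left _ (Real.exp_nonneg _)
        exact mul_le_mul hA hG (Real.exp_nonneg _) (mul_nonneg (Real.rpow_nonneg hexp2.le _) (Real.rpow_nonneg ht0.le _))
    _ = Real.exp (ℓ ^ 2) * (1 - Real.exp (-2)) ^ (-(1:ℝ)/2) *
          (p ^ p * Real.exp (-p) * a ^ (-p)) * r ^ (-(2 * p)) *
          (t ^ (-(1:ℝ)/2) * t ^ p * t ^ (-σ / 2 - 1)) := by
        rw [hsplit]; ring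
    _ = Real.exp (ℓ ^ 2) * (1 - Real.exp (-2)) ^ (-(1:ℝ)/2) *
          (p ^ p * Real.exp (-p) * a ^ (-p)) * r ^ (-(2 * p)) := by
        rw [hT, mul_one]

/-- Bound for `t ∈ (0,1]` discarding the Gaussian factor. -/
lemma region2_bound {σ ℓ x y t : ℝ} (hℓ : 0 < ℓ) (hx : |x| ≤ ℓ) (hy : |y| ≤ ℓ)
    (ht0 : 0 < t) (ht1 : t ≤ 1) :
    mehler t x y * t ^ (-σ / 2 - 1) ≤
      Real.exp (ℓ ^ 2) * (1 - Real.exp (-2)) ^ (-(1:ℝ)/2) * t ^ (-σ / 2 - 3/2) := by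
  have hm := mehler_le hℓ hx hy ht0
  have hA : (1 - Real.exp (-2 * t)) ^ (-(1:ℝ)/2) ≤
      (1 - Real.exp (-2)) ^ (-(1:ℝ)/2) * t ^ (-(1:ℝ)/2) := by
    calc (1 - Real.exp (-2 * t)) ^ (-(1:ℝ)/2)
        ≤ ((1 - Real.exp (-2)) * t) ^ (-(1:ℝ)/2) :=
          Real.rpow_le_rpow_of_nonpos (mul_pos hexp2 ht0) (one_sub_exp_ge ht0.le ht1)
            (by norm_num)
      _ = (1 - Real.exp (-2)) ^ (-(1:ℝ)/2) * t ^ (-(1:ℝ)/2) :=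
          Real.mul_rpow hexp2.le ht0.le
  have hG : Real.exp (-(Real.exp (-2 * t) * (x - y) ^ 2) / (2 * (1 - Real.exp (-2 * t)))) ≤ 1 := by
    apply Real.exp_le_one_iff.mpr
    apply div_nonpos_of_nonpos_of_nonneg
    · simp [mul_nonneg (Real.exp_nonneg _) (sq_nonneg _)]
    · have := one_sub_exp_pos' ht0; linarith
  have hT : t ^ (-(1:ℝ)/2) * t ^ (-σ / 2 - 1) = t ^ (-σ / 2 - 3/2) := by
    rw [← Real.rpow_add ht0]; congr 1; ring
  calc mehler t x y * t ^ (-σ / 2 - 1)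
      ≤ Real.exp (ℓ ^ 2) * ((1 - Real.exp (-2 * t)) ^ (-(1:ℝ)/2) *
          Real.exp (-(Real.exp (-2 * t) * (x - y) ^ 2) / (2 * (1 - Real.exp (-2 * t))))) *
          t ^ (-σ / 2 - 1) :=
        mul_le_mul_of_nonneg_right hm (Real.rpow_nonneg ht0.le _)
    _ ≤ Real.exp (ℓ ^ 2) * (((1 - Real.exp (-2)) ^ (-(1:ℝ)/2) * t ^ (-(1:ℝ)/2)) * 1) *
          t ^ (-σ / 2 - 1) := by
        apply mul_le_mul_of_nonneg_right _ (Real.rpow_nonneg ht0.le _)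
        apply mul_le_mul_of_nonneg_left _ (Real.exp_nonneg _)
        exact mul_le_mul hA hG (Real.exp_nonneg _) (mul_nonneg (Real.rpow_nonneg hexp2.le _) (Real.rpow_nonneg ht0.le _))
    _ = Real.exp (ℓ ^ 2) * (1 - Real.exp (-2)) ^ (-(1:ℝ)/2) *
          (t ^ (-(1:ℝ)/2) * t ^ (-σ / 2 - 1)) := by ring
    _ = Real.exp (ℓ ^ 2) * (1 - Real.exp (-2)) ^ (-(1:ℝ)/2) * t ^ (-σ / 2 - 3/2) := by
        rw [hT]

/-- Bound for `t ≥ 1`. -/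
lemma region3_bound {σ ℓ x y t : ℝ} (hℓ : 0 < ℓ) (hx : |x| ≤ ℓ) (hy : |y| ≤ ℓ)
    (ht : 1 ≤ t) :
    mehler t x y * t ^ (-σ / 2 - 1) ≤
      Real.exp (ℓ ^ 2) * (1 - Real.exp (-2)) ^ (-(1:ℝ)/2) * t ^ (-σ / 2 - 1) := by
  have ht0 : 0 < t := lt_of_lt_of_le one_pos ht
  have hm := mehler_le hℓ hx hy ht0
  have hA : (1 - Real.exp (-2 * t)) ^ (-(1:ℝ)/2) ≤ (1 - Real.exp (-2)) ^ (-(1:ℝ)/2) := by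
    apply Real.rpow_le_rpow_of_nonpos hexp2 _ (by norm_num)
    have : Real.exp (-2 * t) ≤ Real.exp (-2) := Real.exp_le_exp.mpr (by linarith)
    linarith
  have hG : Real.exp (-(Real.exp (-2 * t) * (x - y) ^ 2) / (2 * (1 - Real.exp (-2 * t)))) ≤ 1 := by
    apply Real.exp_le_one_iff.mpr
    apply div_nonpos_of_nonpos_of_nonneg
    · simp [mul_nonneg (Real.exp_nonneg _) (sq_nonneg _)]
    · have := one_sub_exp_pos' ht0; linarith
  calc mehler t x y * t ^ (-σ / 2 - 1)
      ≤ Real.exp (ℓ ^ 2) * ((1 - Real.exp (-2 * t)) ^ (-(1:ℝ)/2) *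
          Real.exp (-(Real.exp (-2 * t) * (x - y) ^ 2) / (2 * (1 - Real.exp (-2 * t))))) *
          t ^ (-σ / 2 - 1) :=
        mul_le_mul_of_nonneg_right hm (Real.rpow_nonneg ht0.le _)
    _ ≤ Real.exp (ℓ ^ 2) * ((1 - Real.exp (-2)) ^ (-(1:ℝ)/2) * 1) * t ^ (-σ / 2 - 1) := by
        apply mul_le_mul_of_nonneg_right _ (Real.rpow_nonneg ht0.le _)
        apply mul_le_mul_of_nonneg_left _ (Real.exp_nonneg _)
        exact mul_le_mul hA hG (Real.exp_nonneg _) (Real.rpow_nonneg hexp2.le _)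
    _ = Real.exp (ℓ ^ 2) * (1 - Real.exp (-2)) ^ (-(1:ℝ)/2) * t ^ (-σ / 2 - 1) := by ring

lemma lintegral_ofReal_rpow_Ioi {a c : ℝ} (ha : a < -1) (hc : 0 < c) :
    ∫⁻ t in Set.Ioi c, ENNReal.ofReal (t ^ a) = ENNReal.ofReal (c ^ (a + 1) / (-(a + 1))) := by
  rw [← ofReal_integral_eq_lintegral_ofReal (integrableOn_Ioi_rpow_of_lt ha hc)
      ((ae_restrict_iff' measurableSet_Ioi).mpr (Filter.Eventually.of_forall
        fun t ht => Real.rpow_nonneg (le_of_lt (lt_trans hc ht)) a)),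
    integral_Ioi_rpow_of_lt ha hc]
  rw [div_neg, neg_div]

lemma mble_ofReal_rpow (c b : ℝ) : Measurable fun t : ℝ => ENNReal.ofReal (c * t ^ b) := by
  fun_prop

/-- Upper bound for the kernel `K_σ` on a compact square:
there is `C_ℓ > 0` with `K_σ(x,y) ≤ C_ℓ / |x−y|^{1+σ}` for `x, y ∈ [-ℓ,ℓ]`, `x ≠ y`. -/
theorem kernel_upper_bound_on_compact (σ ℓ : ℝ) (hσ : 0 < σ) (hℓ : 0 < ℓ) :
    ∃ C > (0 : ℝ), ∀ x ∈ Set.Icc (-ℓ) ℓ, ∀ y ∈ Set.Icc (-ℓ) ℓ, x ≠ y →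
      Kkernel σ x y ≤ ENNReal.ofReal (C / |x - y| ^ (1 + σ)) := by
  have hE : (0:ℝ) < Real.exp (ℓ ^ 2) := Real.exp_pos _
  have hc2 : (0:ℝ) < (1 - Real.exp (-2)) ^ (-(1:ℝ)/2) := Real.rpow_pos_of_pos hexp2 _
  have hp : (0:ℝ) < σ/2 + 3/2 := by linarith
  have ha : (0:ℝ) < Real.exp (-2) / 4 := by positivity
  have hP : (0:ℝ) < ((σ/2 + 3/2) ^ (σ/2 + 3/2) * Real.exp (-(σ/2 + 3/2)) * (Real.exp (-2) / 4) ^ (-(σ/2 + 3/2))) :=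
    mul_pos (mul_pos (Real.rpow_pos_of_pos hp _) (Real.exp_pos _)) (Real.rpow_pos_of_pos ha _)
  have hL : (1:ℝ) ≤ max 1 ((2 * ℓ) ^ (1 + σ)) := le_max_left _ _
  have hL0 : (0:ℝ) < max 1 ((2 * ℓ) ^ (1 + σ)) := lt_of_lt_of_le one_pos hL
  have hA1 : (0:ℝ) < Real.exp (ℓ ^ 2) * (1 - Real.exp (-2)) ^ (-(1:ℝ)/2) * ((σ/2 + 3/2) ^ (σ/2 + 3/2) * Real.exp (-(σ/2 + 3/2)) * (Real.exp (-2) / 4) ^ (-(σ/2 + 3/2))) := mul_pos (mul_pos hE hc2) hP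
  have hA2 : (0:ℝ) < Real.exp (ℓ ^ 2) * (1 - Real.exp (-2)) ^ (-(1:ℝ)/2) * (2/(σ+1)) * (max 1 ((2 * ℓ) ^ (1 + σ))) :=
    mul_pos (mul_pos (mul_pos hE hc2) (by positivity : (0:ℝ) < 2/(σ+1))) hL0
  have hA3 : (0:ℝ) < Real.exp (ℓ ^ 2) * (1 - Real.exp (-2)) ^ (-(1:ℝ)/2) * (2/σ) * (max 1 ((2 * ℓ) ^ (1 + σ))) :=
    mul_pos (mul_pos (mul_pos hE hc2) (by positivity : (0:ℝ) < 2/σ)) hL0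
  refine ⟨Real.exp (ℓ ^ 2) * (1 - Real.exp (-2)) ^ (-(1:ℝ)/2) * ((σ/2 + 3/2) ^ (σ/2 + 3/2) * Real.exp (-(σ/2 + 3/2)) * (Real.exp (-2) / 4) ^ (-(σ/2 + 3/2))) + Real.exp (ℓ ^ 2) * (1 - Real.exp (-2)) ^ (-(1:ℝ)/2) * (2/(σ+1)) * (max 1 ((2 * ℓ) ^ (1 + σ))) + Real.exp (ℓ ^ 2) * (1 - Real.exp (-2)) ^ (-(1:ℝ)/2) * (2/σ) * (max 1 ((2 * ℓ) ^ (1 + σ))), by linarith, ?_⟩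
  intro x hx y hy hxy
  have hxl : |x| ≤ ℓ := abs_le.mpr ⟨hx.1, hx.2⟩
  have hyl : |y| ≤ ℓ := abs_le.mpr ⟨hy.1, hy.2⟩
  set r : ℝ := |x - y| with hrdef
  have hr0 : 0 < r := abs_pos.mpr (sub_ne_zero.mpr hxy)
  have hr2l : r ≤ 2 * ℓ := by
    rw [hrdef]
    exact abs_le.mpr ⟨by linarith [hx.1, hy.2], by linarith [hx.2, hy.1]⟩
  set s : ℝ := min (r ^ 2) 1 with hsdef
  have hs0 : 0 < s := lt_min (by positivity) one_pos
  have hs1 : s ≤ 1 := min_le_right _ _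
  have hrL : r ^ (1 + σ) ≤ max 1 ((2 * ℓ) ^ (1 + σ)) :=
    le_trans (Real.rpow_le_rpow hr0.le hr2l (by linarith)) (le_max_right _ _)
  have hrp : (0:ℝ) < r ^ (1 + σ) := Real.rpow_pos_of_pos hr0 _
  have hgen : 1 ≤ (max 1 ((2 * ℓ) ^ (1 + σ))) * r ^ (-(1 + σ)) := by
    rw [Real.rpow_neg hr0.le, ← div_eq_mul_inv, le_div_iff₀ hrp, one_mul]; exact hrL
  have hs2 : s ^ (-((σ + 1)/2)) ≤ (max 1 ((2 * ℓ) ^ (1 + σ))) * r ^ (-(1 + σ)) := by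
    rcases le_or_gt r 1 with h1 | h1
    · have hsr : s = r ^ 2 := min_eq_left (by nlinarith)
      have heq : s ^ (-((σ + 1)/2)) = r ^ (-(1 + σ)) := by
        rw [hsr, ← Real.rpow_natCast r 2, ← Real.rpow_mul hr0.le]
        congr 1; push_cast; ring
      rw [heq]
      exact le_mul_of_one_le_left (Real.rpow_nonneg hr0.le _) hL
    · have hsr : s = 1 := min_eq_right (by nlinarith)
      rw [hsr, Real.one_rpow]; exact hgen
  have hr1 : r ^ (-(2 * (σ/2 + 3/2))) * s ≤ r ^ (-(1 + σ)) := by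
    rcases le_or_gt r 1 with h1 | h1
    · have hsr : s ≤ r ^ (2:ℝ) := by
        rw [show r ^ (2:ℝ) = r ^ (2:ℕ) by rw [← Real.rpow_natCast r 2]; norm_num]
        exact min_le_left _ _
      calc r ^ (-(2 * (σ/2 + 3/2))) * s ≤ r ^ (-(2 * (σ/2 + 3/2))) * r ^ (2:ℝ) :=
            mul_le_mul_of_nonneg_left hsr (Real.rpow_nonneg hr0.le _)
        _ = r ^ (-(2 * (σ/2 + 3/2)) + 2) := (Real.rpow_add hr0 _ _).symm
        _ = r ^ (-(1 + σ)) := by congr 1; ring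
    · calc r ^ (-(2 * (σ/2 + 3/2))) * s ≤ r ^ (-(2 * (σ/2 + 3/2))) * 1 :=
            mul_le_mul_of_nonneg_left hs1 (Real.rpow_nonneg hr0.le _)
        _ = r ^ (-(2 * (σ/2 + 3/2))) := mul_one _
        _ ≤ r ^ (-(1 + σ)) := Real.rpow_le_rpow_of_exponent_le h1.le (by linarith)
  have hsplit : Kkernel σ x y =
      (∫⁻ t in Set.Ioc 0 s, ENNReal.ofReal (mehler t x y * t ^ (-σ / 2 - 1))) +
      (∫⁻ t in Set.Ioc s 1, ENNReal.ofReal (mehler t x y * t ^ (-σ / 2 - 1))) +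
      (∫⁻ t in Set.Ioi 1, ENNReal.ofReal (mehler t x y * t ^ (-σ / 2 - 1))) := by
    unfold Kkernel
    rw [← Set.Ioc_union_Ioi_eq_Ioi (zero_le_one (α := ℝ)),
      lintegral_union measurableSet_Ioi Set.Ioc_disjoint_Ioi_same,
      ← Set.Ioc_union_Ioc_eq_Ioc hs0.le hs1,
      lintegral_union measurableSet_Ioc (Set.Ioc_disjoint_Ioc_of_le le_rfl)]
  have hI1 : (∫⁻ t in Set.Ioc 0 s, ENNReal.ofReal (mehler t x y * t ^ (-σ / 2 - 1))) ≤
      ENNReal.ofReal ((Real.exp (ℓ ^ 2) * (1 - Real.exp (-2)) ^ (-(1:ℝ)/2) * ((σ/2 + 3/2) ^ (σ/2 + 3/2) * Real.exp (-(σ/2 + 3/2)) * (Real.exp (-2) / 4) ^ (-(σ/2 + 3/2)))) * r ^ (-(1 + σ))) := by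
    calc (∫⁻ t in Set.Ioc 0 s, ENNReal.ofReal (mehler t x y * t ^ (-σ / 2 - 1)))
        ≤ ∫⁻ _ in Set.Ioc 0 s, ENNReal.ofReal ((Real.exp (ℓ ^ 2) * (1 - Real.exp (-2)) ^ (-(1:ℝ)/2) * ((σ/2 + 3/2) ^ (σ/2 + 3/2) * Real.exp (-(σ/2 + 3/2)) * (Real.exp (-2) / 4) ^ (-(σ/2 + 3/2)))) * r ^ (-(2 * (σ/2 + 3/2)))) :=
          setLIntegral_mono measurable_const (fun t ht => ENNReal.ofReal_le_ofReal
            (region1_bound hσ hℓ hxl hyl hxy ht.1 (le_trans ht.2 hs1)))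
      _ = ENNReal.ofReal ((Real.exp (ℓ ^ 2) * (1 - Real.exp (-2)) ^ (-(1:ℝ)/2) * ((σ/2 + 3/2) ^ (σ/2 + 3/2) * Real.exp (-(σ/2 + 3/2)) * (Real.exp (-2) / 4) ^ (-(σ/2 + 3/2)))) * r ^ (-(2 * (σ/2 + 3/2)))) * ENNReal.ofReal s := by
          rw [setLIntegral_const, Real.volume_Ioc, sub_zero]
      _ = ENNReal.ofReal ((Real.exp (ℓ ^ 2) * (1 - Real.exp (-2)) ^ (-(1:ℝ)/2) * ((σ/2 + 3/2) ^ (σ/2 + 3/2) * Real.exp (-(σ/2 + 3/2)) * (Real.exp (-2) / 4) ^ (-(σ/2 + 3/2)))) * r ^ (-(2 * (σ/2 + 3/2))) * s) := by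
          rw [← ENNReal.ofReal_mul (mul_nonneg hA1.le (Real.rpow_nonneg hr0.le _))]
      _ ≤ ENNReal.ofReal ((Real.exp (ℓ ^ 2) * (1 - Real.exp (-2)) ^ (-(1:ℝ)/2) * ((σ/2 + 3/2) ^ (σ/2 + 3/2) * Real.exp (-(σ/2 + 3/2)) * (Real.exp (-2) / 4) ^ (-(σ/2 + 3/2)))) * r ^ (-(1 + σ))) := ENNReal.ofReal_le_ofReal (by
          rw [mul_assoc]
          exact mul_le_mul_of_nonneg_left hr1 hA1.le)
  have hb2 : (-σ / 2 - 3/2 : ℝ) < -1 := by linarith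
  have hI2 : (∫⁻ t in Set.Ioc s 1, ENNReal.ofReal (mehler t x y * t ^ (-σ / 2 - 1))) ≤
      ENNReal.ofReal ((Real.exp (ℓ ^ 2) * (1 - Real.exp (-2)) ^ (-(1:ℝ)/2) * (2/(σ+1)) * (max 1 ((2 * ℓ) ^ (1 + σ)))) * r ^ (-(1 + σ))) := by
    calc (∫⁻ t in Set.Ioc s 1, ENNReal.ofReal (mehler t x y * t ^ (-σ / 2 - 1)))
        ≤ ∫⁻ t in Set.Ioc s 1,
            ENNReal.ofReal (Real.exp (ℓ ^ 2) * (1 - Real.exp (-2)) ^ (-(1:ℝ)/2) * t ^ (-σ / 2 - 3/2)) :=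
          setLIntegral_mono (mble_ofReal_rpow _ _) (fun t ht => ENNReal.ofReal_le_ofReal
            (region2_bound hℓ hxl hyl (lt_trans hs0 ht.1) ht.2))
      _ ≤ ∫⁻ t in Set.Ioi s, ENNReal.ofReal (Real.exp (ℓ ^ 2) * (1 - Real.exp (-2)) ^ (-(1:ℝ)/2) * t ^ (-σ / 2 - 3/2)) :=
          lintegral_mono_set Set.Ioc_subset_Ioi_self
      _ = ∫⁻ t in Set.Ioi s,
            ENNReal.ofReal (Real.exp (ℓ ^ 2) * (1 - Real.exp (-2)) ^ (-(1:ℝ)/2)) * ENNReal.ofReal (t ^ (-σ / 2 - 3/2)) := by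
          simp_rw [ENNReal.ofReal_mul (mul_pos hE hc2).le]
      _ = ENNReal.ofReal (Real.exp (ℓ ^ 2) * (1 - Real.exp (-2)) ^ (-(1:ℝ)/2)) *
            ∫⁻ t in Set.Ioi s, ENNReal.ofReal (t ^ (-σ / 2 - 3/2)) :=
          lintegral_const_mul' _ _ ENNReal.ofReal_ne_top
      _ = ENNReal.ofReal (Real.exp (ℓ ^ 2) * (1 - Real.exp (-2)) ^ (-(1:ℝ)/2)) *
            ENNReal.ofReal (s ^ (-σ / 2 - 3/2 + 1) / (-(-σ / 2 - 3/2 + 1))) := by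
          rw [lintegral_ofReal_rpow_Ioi hb2 hs0]
      _ = ENNReal.ofReal (Real.exp (ℓ ^ 2) * (1 - Real.exp (-2)) ^ (-(1:ℝ)/2) *
            (s ^ (-σ / 2 - 3/2 + 1) / (-(-σ / 2 - 3/2 + 1)))) :=
          (ENNReal.ofReal_mul (mul_pos hE hc2).le).symm
      _ ≤ ENNReal.ofReal ((Real.exp (ℓ ^ 2) * (1 - Real.exp (-2)) ^ (-(1:ℝ)/2) * (2/(σ+1)) * (max 1 ((2 * ℓ) ^ (1 + σ)))) * r ^ (-(1 + σ))) := ENNReal.ofReal_le_ofReal (by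
          rw [show (-σ / 2 - 3/2 + 1 : ℝ) = -((σ + 1)/2) by ring,
            neg_neg]
          have heq : Real.exp (ℓ ^ 2) * (1 - Real.exp (-2)) ^ (-(1:ℝ)/2) * (s ^ (-((σ + 1)/2)) / ((σ + 1)/2)) =
              (Real.exp (ℓ ^ 2) * (1 - Real.exp (-2)) ^ (-(1:ℝ)/2) * (2/(σ+1))) * s ^ (-((σ + 1)/2)) := by
            field_simp
          rw [heq]
          calc (Real.exp (ℓ ^ 2) * (1 - Real.exp (-2)) ^ (-(1:ℝ)/2) * (2/(σ+1))) * s ^ (-((σ + 1)/2))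
              ≤ (Real.exp (ℓ ^ 2) * (1 - Real.exp (-2)) ^ (-(1:ℝ)/2) * (2/(σ+1))) * ((max 1 ((2 * ℓ) ^ (1 + σ))) * r ^ (-(1 + σ))) :=
                mul_le_mul_of_nonneg_left hs2
                  (mul_nonneg (mul_pos hE hc2).le (by positivity))
            _ = (Real.exp (ℓ ^ 2) * (1 - Real.exp (-2)) ^ (-(1:ℝ)/2) * (2/(σ+1)) * (max 1 ((2 * ℓ) ^ (1 + σ)))) * r ^ (-(1 + σ)) := by ring)
  have hb3 : (-σ / 2 - 1 : ℝ) < -1 := by linarith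
  have hI3 : (∫⁻ t in Set.Ioi 1, ENNReal.ofReal (mehler t x y * t ^ (-σ / 2 - 1))) ≤
      ENNReal.ofReal ((Real.exp (ℓ ^ 2) * (1 - Real.exp (-2)) ^ (-(1:ℝ)/2) * (2/σ) * (max 1 ((2 * ℓ) ^ (1 + σ)))) * r ^ (-(1 + σ))) := by
    calc (∫⁻ t in Set.Ioi 1, ENNReal.ofReal (mehler t x y * t ^ (-σ / 2 - 1)))
        ≤ ∫⁻ t in Set.Ioi 1, ENNReal.ofReal (Real.exp (ℓ ^ 2) * (1 - Real.exp (-2)) ^ (-(1:ℝ)/2) * t ^ (-σ / 2 - 1)) :=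
          setLIntegral_mono (mble_ofReal_rpow _ _) (fun t ht => ENNReal.ofReal_le_ofReal
            (region3_bound hℓ hxl hyl (le_of_lt ht)))
      _ = ∫⁻ t in Set.Ioi 1,
            ENNReal.ofReal (Real.exp (ℓ ^ 2) * (1 - Real.exp (-2)) ^ (-(1:ℝ)/2)) * ENNReal.ofReal (t ^ (-σ / 2 - 1)) := by
          simp_rw [ENNReal.ofReal_mul (mul_pos hE hc2).le]
      _ = ENNReal.ofReal (Real.exp (ℓ ^ 2) * (1 - Real.exp (-2)) ^ (-(1:ℝ)/2)) *
            ∫⁻ t in Set.Ioi 1, ENNReal.ofReal (t ^ (-σ / 2 - 1)) :=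
          lintegral_const_mul' _ _ ENNReal.ofReal_ne_top
      _ = ENNReal.ofReal (Real.exp (ℓ ^ 2) * (1 - Real.exp (-2)) ^ (-(1:ℝ)/2)) *
            ENNReal.ofReal ((1:ℝ) ^ (-σ / 2 - 1 + 1) / (-(-σ / 2 - 1 + 1))) := by
          rw [lintegral_ofReal_rpow_Ioi hb3 one_pos]
      _ = ENNReal.ofReal (Real.exp (ℓ ^ 2) * (1 - Real.exp (-2)) ^ (-(1:ℝ)/2) *
            ((1:ℝ) ^ (-σ / 2 - 1 + 1) / (-(-σ / 2 - 1 + 1)))) :=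
          (ENNReal.ofReal_mul (mul_pos hE hc2).le).symm
      _ ≤ ENNReal.ofReal ((Real.exp (ℓ ^ 2) * (1 - Real.exp (-2)) ^ (-(1:ℝ)/2) * (2/σ) * (max 1 ((2 * ℓ) ^ (1 + σ)))) * r ^ (-(1 + σ))) := ENNReal.ofReal_le_ofReal (by
          rw [Real.one_rpow, show (-(-σ / 2 - 1 + 1) : ℝ) = σ/2 by ring]
          have heq : Real.exp (ℓ ^ 2) * (1 - Real.exp (-2)) ^ (-(1:ℝ)/2) * (1 / (σ/2)) = (Real.exp (ℓ ^ 2) * (1 - Real.exp (-2)) ^ (-(1:ℝ)/2) * (2/σ)) * 1 := by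
            field_simp
          rw [heq]
          calc (Real.exp (ℓ ^ 2) * (1 - Real.exp (-2)) ^ (-(1:ℝ)/2) * (2/σ)) * 1
              ≤ (Real.exp (ℓ ^ 2) * (1 - Real.exp (-2)) ^ (-(1:ℝ)/2) * (2/σ)) * ((max 1 ((2 * ℓ) ^ (1 + σ))) * r ^ (-(1 + σ))) :=
                mul_le_mul_of_nonneg_left hgen
                  (mul_nonneg (mul_pos hE hc2).le (by positivity))
            _ = (Real.exp (ℓ ^ 2) * (1 - Real.exp (-2)) ^ (-(1:ℝ)/2) * (2/σ) * (max 1 ((2 * ℓ) ^ (1 + σ)))) * r ^ (-(1 + σ)) := by ring)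
  have hdiv : ∀ c : ℝ, c / r ^ (1 + σ) = c * r ^ (-(1 + σ)) := fun c => by
    rw [Real.rpow_neg hr0.le]; exact div_eq_mul_inv c _
  rw [hsplit, hdiv]
  refine le_trans (add_le_add (add_le_add hI1 hI2) hI3) ?_
  rw [← ENNReal.ofReal_add (mul_nonneg hA1.le (Real.rpow_nonneg hr0.le _))
      (mul_nonneg hA2.le (Real.rpow_nonneg hr0.le _)),
    ← ENNReal.ofReal_add (add_nonneg (mul_nonneg hA1.le (Real.rpow_nonneg hr0.le _))
      (mul_nonneg hA2.le (Real.rpow_nonneg hr0.le _)))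
      (mul_nonneg hA3.le (Real.rpow_nonneg hr0.le _))]
  exact ENNReal.ofReal_le_ofReal (le_of_eq (by ring))
end

section
/- Let σ > 0 and t₀ > 0. Then there exists a constant C_{t₀} > 0, depending only on t₀ (and σ), such that for all x, y ∈ ℝ with 0 < |x−y| ≤ 1 one has K_σ(x,y) ≥ C_{t₀} · exp( ((x²+y²)/4) · (1 − (1−e^{−t₀})/(1+e^{−t₀})) ) · |x−y|^{−(1+σ)}. -/
open MeasureTheory Real ENNReal

set_option maxHeartbeats 1000000

private lemma mehler_exp_id (r x y : ℝ) (h1 : (1:ℝ) - r ≠ 0) (h2 : (1:ℝ) + r ≠ 0) :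
    -(r ^ 2 * x ^ 2 - 2 * r * x * y + r ^ 2 * y ^ 2) / (2 * (1 - r ^ 2)) =
      -(r * (x - y) ^ 2 / (4 * (1 - r))) + r * (x + y) ^ 2 / (4 * (1 + r)) := by
  have h3 : (1:ℝ) - r ^ 2 ≠ 0 := by
    intro h
    rcases mul_eq_zero.mp (show ((1:ℝ) - r) * (1 + r) = 0 by nlinarith) with h' | h'
    exacts [h1 h', h2 h']
  field_simp
  ring

private lemma G_sub_id (r0 a : ℝ) (h2 : (1:ℝ) + r0 ≠ 0) :
    a / 4 * (1 - (1 - r0) / (1 + r0)) - 1 / 4 =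
      (a * 2 * r0 - (1 + r0)) / (4 * (1 + r0)) := by
  field_simp
  ring

/-- The key pointwise lower bound on the Mehler kernel for
`t ∈ (α u², 2 α u²]` where `α = T/2`, `T = min t₀ 1`, `u = |x-y| ≤ 1`. -/
private lemma mehler_pointwise (σ t₀ T α G x y u t : ℝ) (hσ : 0 < σ) (ht₀ : 0 < t₀)
    (hT0 : 0 < T) (hTt₀ : T ≤ t₀) (hα : α = T / 2)
    (hu : u = |x - y|) (hu0 : 0 < u) (hu21 : u ^ 2 ≤ 1)
    (hG : G = (x ^ 2 + y ^ 2) / 4 * (1 - (1 - Real.exp (-t₀)) / (1 + Real.exp (-t₀))))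
    (ht1 : α * u ^ 2 < t) (ht2 : t ≤ 2 * α * u ^ 2) :
    (4 * α * u ^ 2) ^ (-(1 : ℝ) / 2) * (2 * α * u ^ 2) ^ (-σ / 2 - 1) *
        Real.exp (G - 1 / 4 - Real.exp T / (4 * α)) ≤ mehler t x y * t ^ (-σ / 2 - 1) := by
  have hα0 : 0 < α := by rw [hα]; positivity
  have hu2 : (x - y) ^ 2 = u ^ 2 := by rw [hu, sq_abs]
  have ht0 : 0 < t := lt_trans (by positivity) ht1
  have htT : t ≤ T := by nlinarith
  have htt₀ : t ≤ t₀ := htT.trans hTt₀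
  obtain ⟨r, hrdef⟩ : ∃ r, r = Real.exp (-t) := ⟨_, rfl⟩
  obtain ⟨r0, hr0def⟩ : ∃ r0, r0 = Real.exp (-t₀) := ⟨_, rfl⟩
  have hr0 : 0 < r := hrdef ▸ Real.exp_pos _
  have hr1 : r < 1 := hrdef ▸ Real.exp_lt_one_iff.mpr (by linarith)
  have hr00 : 0 < r0 := hr0def ▸ Real.exp_pos _
  have hr0r : r0 ≤ r := by rw [hrdef, hr0def]; exact Real.exp_le_exp.mpr (by linarith)
  have hr2 : Real.exp (-2 * t) = r ^ 2 := by
    rw [hrdef, show (-2 * t) = (-t) + (-t) by ring, Real.exp_add]; ring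
  have hEid := mehler_exp_id r x y (by nlinarith) (by nlinarith)
  have key1 : t * Real.exp (-T) ≤ 1 - r := by
    have h := Real.add_one_le_exp t
    have h1 : Real.exp (-t) * Real.exp t = 1 := by rw [← Real.exp_add]; simp
    have h2 : Real.exp (-T) ≤ Real.exp (-t) := Real.exp_le_exp.mpr (by linarith)
    nlinarith [mul_le_mul_of_nonneg_left h (Real.exp_pos (-t)).le, hrdef ▸ le_refl r]
  have ht_le : t ≤ Real.exp T * (1 - r) := by
    have h1 : Real.exp (-T) * Real.exp T = 1 := by rw [← Real.exp_add]; simp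
    nlinarith [mul_le_mul_of_nonneg_left key1 (Real.exp_pos T).le]
  have hb : r * (x - y) ^ 2 / (4 * (1 - r)) ≤ Real.exp T / (4 * α) := by
    rw [div_le_div_iff₀ (by nlinarith) (by positivity)]
    have h1 : r * (x - y) ^ 2 ≤ (x - y) ^ 2 := by nlinarith [sq_nonneg (x - y)]
    have h2 : α * (x - y) ^ 2 ≤ t := by rw [hu2]; linarith
    nlinarith [sq_nonneg (x - y)]
  have hc : G - 1 / 4 ≤ r * (x + y) ^ 2 / (4 * (1 + r)) := by
    have hp0 : (0 : ℝ) < 1 + r0 := by linarith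
    have hp : (0 : ℝ) < 1 + r := by linarith
    have step1 : r0 * (x + y) ^ 2 / (4 * (1 + r0)) ≤ r * (x + y) ^ 2 / (4 * (1 + r)) := by
      rw [div_le_div_iff₀ (by positivity) (by positivity)]
      nlinarith [sq_nonneg (x + y)]
    have hGid : G - 1 / 4 = ((x ^ 2 + y ^ 2) * 2 * r0 - (1 + r0)) / (4 * (1 + r0)) := by
      rw [hG, ← hr0def]; exact G_sub_id r0 _ (ne_of_gt hp0)
    have hr01 : r0 < 1 := hr00.trans_le hr0r |>.trans hr1 |> fun _ => lt_of_le_of_lt hr0r hr1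
    have h5 : r0 * (x - y) ^ 2 ≤ r0 := by nlinarith [hu2, hu21]
    have hnum : (x ^ 2 + y ^ 2) * 2 * r0 - (1 + r0) ≤ r0 * (x + y) ^ 2 := by nlinarith
    have step2 : G - 1 / 4 ≤ r0 * (x + y) ^ 2 / (4 * (1 + r0)) := by
      rw [hGid]
      exact div_le_div_of_nonneg_right hnum (by positivity) |>.trans_eq rfl
    linarith
  have hE : G - 1 / 4 - Real.exp T / (4 * α) ≤
      -(r ^ 2 * x ^ 2 - 2 * r * x * y + r ^ 2 * y ^ 2) / (2 * (1 - r ^ 2)) := by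
    rw [hEid]; linarith
  have hpre : (2 * t) ^ (-(1 : ℝ) / 2) ≤ (1 - Real.exp (-2 * t)) ^ (-(1 : ℝ) / 2) := by
    have h1 : (1 : ℝ) - Real.exp (-2 * t) ≤ 2 * t := by
      nlinarith [Real.add_one_le_exp (-2 * t)]
    have h2 : (0 : ℝ) < 1 - Real.exp (-2 * t) := by rw [hr2]; nlinarith
    exact Real.rpow_le_rpow_of_nonpos h2 h1 (by norm_num)
  have hm : (2 * t) ^ (-(1 : ℝ) / 2) *
      Real.exp (G - 1 / 4 - Real.exp T / (4 * α)) ≤ mehler t x y := by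
    unfold mehler
    rw [hr2, ← hrdef]
    have h2 : (0 : ℝ) ≤ 1 - r ^ 2 := by nlinarith
    refine mul_le_mul ?_ (Real.exp_le_exp.mpr hE) (Real.exp_pos _).le
      (Real.rpow_nonneg h2 _)
    rw [hr2] at hpre; exact hpre
  have p1 : (4 * α * u ^ 2) ^ (-(1 : ℝ) / 2) ≤ (2 * t) ^ (-(1 : ℝ) / 2) :=
    Real.rpow_le_rpow_of_nonpos (by positivity) (by linarith) (by norm_num)
  have p2 : (2 * α * u ^ 2) ^ (-σ / 2 - 1) ≤ t ^ (-σ / 2 - 1) :=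
    Real.rpow_le_rpow_of_nonpos ht0 ht2 (by nlinarith)
  calc (4 * α * u ^ 2) ^ (-(1 : ℝ) / 2) * (2 * α * u ^ 2) ^ (-σ / 2 - 1) *
        Real.exp (G - 1 / 4 - Real.exp T / (4 * α))
      ≤ (2 * t) ^ (-(1 : ℝ) / 2) * t ^ (-σ / 2 - 1) *
        Real.exp (G - 1 / 4 - Real.exp T / (4 * α)) :=
        mul_le_mul_of_nonneg_right
          (mul_le_mul p1 p2 (Real.rpow_nonneg (by positivity) _)
            (Real.rpow_nonneg (by positivity) _)) (Real.exp_pos _).le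
    _ = ((2 * t) ^ (-(1 : ℝ) / 2) *
          Real.exp (G - 1 / 4 - Real.exp T / (4 * α))) * t ^ (-σ / 2 - 1) := by ring
    _ ≤ mehler t x y * t ^ (-σ / 2 - 1) :=
        mul_le_mul_of_nonneg_right hm (Real.rpow_nonneg ht0.le _)

private lemma const_id (σ α G T u : ℝ) (hα0 : 0 < α) (hu0 : 0 < u) :
    (4 * α) ^ (-(1 : ℝ) / 2) * (2 * α) ^ (-σ / 2 - 1) * α *
        Real.exp (-(1 / 4) - Real.exp T / (4 * α)) * Real.exp G * u ^ (-(1 + σ)) =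
      ((4 * α * u ^ 2) ^ (-(1 : ℝ) / 2) * (2 * α * u ^ 2) ^ (-σ / 2 - 1) *
        Real.exp (G - 1 / 4 - Real.exp T / (4 * α))) * (α * u ^ 2) := by
  have e1 : (4 * α * u ^ 2 : ℝ) ^ (-(1 : ℝ) / 2) =
      (4 * α) ^ (-(1 : ℝ) / 2) * (u ^ 2) ^ (-(1 : ℝ) / 2) :=
    Real.mul_rpow (by positivity) (by positivity)
  have e2 : (2 * α * u ^ 2 : ℝ) ^ (-σ / 2 - 1) =
      (2 * α) ^ (-σ / 2 - 1) * (u ^ 2) ^ (-σ / 2 - 1) :=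
    Real.mul_rpow (by positivity) (by positivity)
  have e3 : (u ^ 2 : ℝ) ^ (-(1 : ℝ) / 2) * (u ^ 2) ^ (-σ / 2 - 1) * u ^ 2 =
      u ^ (-(1 + σ)) := by
    have hpow : (u ^ 2 : ℝ) = u ^ (2 : ℝ) := by
      rw [show ((2 : ℝ)) = ((2 : ℕ) : ℝ) by norm_num, Real.rpow_natCast]
    rw [hpow, ← Real.rpow_mul hu0.le, ← Real.rpow_mul hu0.le, ← Real.rpow_add hu0,
      ← Real.rpow_add hu0]
    congr 1
    ring
  have e4 : Real.exp (G - 1 / 4 - Real.exp T / (4 * α)) =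
      Real.exp G * Real.exp (-(1 / 4) - Real.exp T / (4 * α)) := by
    rw [← Real.exp_add]; congr 1; ring
  rw [e1, e2, e4, ← e3]
  ring

/-- Gaussian-weighted lower bound for the kernel `K_σ` near the diagonal:
there is `C_{t₀} > 0` such that for `0 < |x−y| ≤ 1`,
`K_σ(x,y) ≥ C_{t₀} exp(((x²+y²)/4)(1 − (1−e^{−t₀})/(1+e^{−t₀}))) |x−y|^{−(1+σ)}`. -/
theorem kernel_lower_bound_near_diagonal (σ t₀ : ℝ) (hσ : 0 < σ) (ht₀ : 0 < t₀) :
    ∃ C > (0 : ℝ), ∀ x y : ℝ, x ≠ y → |x - y| ≤ 1 →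
      ENNReal.ofReal (C *
          Real.exp ((x ^ 2 + y ^ 2) / 4 *
            (1 - (1 - Real.exp (-t₀)) / (1 + Real.exp (-t₀)))) *
          |x - y| ^ (-(1 + σ))) ≤ Kkernel σ x y := by
  obtain ⟨T, hTdef⟩ : ∃ T, T = min t₀ 1 := ⟨_, rfl⟩
  have hT0 : 0 < T := hTdef ▸ lt_min ht₀ one_pos
  have hTt₀ : T ≤ t₀ := hTdef ▸ min_le_left _ _
  have hT1 : T ≤ 1 := hTdef ▸ min_le_right _ _
  obtain ⟨α, hαdef⟩ : ∃ α, α = T / 2 := ⟨_, rfl⟩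
  have hα0 : 0 < α := by rw [hαdef]; positivity
  refine ⟨(4 * α) ^ (-(1 : ℝ) / 2) * (2 * α) ^ (-σ / 2 - 1) * α *
      Real.exp (-(1 / 4) - Real.exp T / (4 * α)), by positivity, ?_⟩
  intro x y hxy hle
  obtain ⟨G, hGdef⟩ : ∃ G, G =
      (x ^ 2 + y ^ 2) / 4 * (1 - (1 - Real.exp (-t₀)) / (1 + Real.exp (-t₀))) := ⟨_, rfl⟩
  obtain ⟨u, hudef⟩ : ∃ u, u = |x - y| := ⟨_, rfl⟩
  rw [← hGdef, ← hudef]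
  have hu0 : 0 < u := hudef ▸ abs_pos.mpr (sub_ne_zero.mpr hxy)
  have hu1 : u ≤ 1 := hudef ▸ hle
  have hu21 : u ^ 2 ≤ 1 := by nlinarith
  have hBpos : 0 < (4 * α * u ^ 2) ^ (-(1 : ℝ) / 2) * (2 * α * u ^ 2) ^ (-σ / 2 - 1) *
      Real.exp (G - 1 / 4 - Real.exp T / (4 * α)) := by positivity
  calc ENNReal.ofReal ((4 * α) ^ (-(1 : ℝ) / 2) * (2 * α) ^ (-σ / 2 - 1) * α *
        Real.exp (-(1 / 4) - Real.exp T / (4 * α)) * Real.exp G * u ^ (-(1 + σ)))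
      = ENNReal.ofReal ((4 * α * u ^ 2) ^ (-(1 : ℝ) / 2) * (2 * α * u ^ 2) ^ (-σ / 2 - 1) *
          Real.exp (G - 1 / 4 - Real.exp T / (4 * α))) * ENNReal.ofReal (α * u ^ 2) := by
        rw [← ENNReal.ofReal_mul hBpos.le, const_id σ α G T u hα0 hu0]
    _ = ∫⁻ _ in Set.Ioc (α * u ^ 2) (2 * α * u ^ 2),
          ENNReal.ofReal ((4 * α * u ^ 2) ^ (-(1 : ℝ) / 2) * (2 * α * u ^ 2) ^ (-σ / 2 - 1) *
            Real.exp (G - 1 / 4 - Real.exp T / (4 * α))) := by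
        rw [setLIntegral_const, Real.volume_Ioc]
        congr 1
        ring
    _ ≤ ∫⁻ t in Set.Ioc (α * u ^ 2) (2 * α * u ^ 2),
          ENNReal.ofReal (mehler t x y * t ^ (-σ / 2 - 1)) :=
        setLIntegral_mono' measurableSet_Ioc fun t ht =>
          ENNReal.ofReal_le_ofReal
            (mehler_pointwise σ t₀ T α G x y u t hσ ht₀ hT0 hTt₀ hαdef hudef hu0 hu21 hGdef
              ht.1 ht.2)
    _ ≤ Kkernel σ x y := by
        unfold Kkernel
        exact lintegral_mono_set fun t ht => lt_trans (by positivity) ht.1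
end
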